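/- If w ~ N(0, I_D) is a standard Gaussian vector in R^D and y, ȳ are unit vectors with ‖y − ȳ‖₂ ≤ γ ≤ 1, then the probability that wᵀy and wᵀȳ have strictly opposite signs is at most √(2γ). -/

import Mathlib

/-!
Put `s = y + ȳ` and `d = y - ȳ`. The numbers `⟪y, w⟫` and `⟪ȳ, w⟫` have opposite signs exactly
when their product is negative, i.e. when `|⟪s, w⟫| < |⟪d, w⟫|`. Now `⟪s, w⟫ ~ N(0, ‖s‖²)` with
`‖s‖² = 4 - ‖d‖² ≥ 3` is anticoncentrated, `P(|⟪s, w⟫| < t) ≤ 2t / √(2π‖s‖²)`, because the Gaussian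
density is bounded by `1 / √(2π‖s‖²)`; and `⟪d, w⟫ ~ N(0, ‖d‖²)` with `‖d‖ ≤ γ` is concentrated,
`P(t ≤ |⟪d, w⟫|) ≤ γ² / t²` by Chebyshev. For `t = 2√γ` and `γ ≤ 1` the sum is at most
`(2√2/3 + 1/4)√γ ≤ √(2γ)`.
-/

open MeasureTheory ProbabilityTheory Real Set
open scoped NNReal ENNReal

lemma abs_add_lt_abs_sub_of_mul_neg {a b : ℝ} (h : a * b < 0) : |a + b| < |a - b| :=
  sq_lt_sq.1 (by nlinarith)

namespace ProbabilityTheory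

lemma gaussianPDFReal_le_inv_sqrt (μ : ℝ) (v : ℝ≥0) (x : ℝ) :
    gaussianPDFReal μ v x ≤ (√(2 * π * v))⁻¹ :=
  mul_le_of_le_one_right (by positivity) <| exp_le_one_iff.2 <|
    div_nonpos_of_nonpos_of_nonneg (neg_nonpos.2 (sq_nonneg _)) (by positivity)

lemma gaussianReal_le_ofReal_mul_volume (μ : ℝ) {v : ℝ≥0} (hv : v ≠ 0) (s : Set ℝ) :
    gaussianReal μ v s ≤ ENNReal.ofReal (√(2 * π * v))⁻¹ * volume s := by
  rw [gaussianReal_apply μ hv, ← setLIntegral_const]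
  exact lintegral_mono fun x => ENNReal.ofReal_le_ofReal (gaussianPDFReal_le_inv_sqrt μ v x)

lemma gaussianReal_Ioo_le (μ : ℝ) {v : ℝ≥0} (hv : v ≠ 0) (t : ℝ) :
    gaussianReal μ v (Ioo (μ - t) (μ + t)) ≤ ENNReal.ofReal (2 * t / √(2 * π * v)) := by
  calc gaussianReal μ v (Ioo (μ - t) (μ + t))
      ≤ ENNReal.ofReal (√(2 * π * v))⁻¹ * ENNReal.ofReal (2 * t) := by
        simpa [Real.volume_Ioo, two_mul, add_sub_sub_cancel, ← add_assoc]
          using gaussianReal_le_ofReal_mul_volume μ hv (Ioo (μ - t) (μ + t))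
    _ = ENNReal.ofReal (2 * t / √(2 * π * v)) := by
        rw [← ENNReal.ofReal_mul (by positivity), div_eq_inv_mul]

lemma gaussianReal_le_abs_sub_le (μ : ℝ) (v : ℝ≥0) {t : ℝ} (ht : 0 < t) :
    gaussianReal μ v {x | t ≤ |x - μ|} ≤ ENNReal.ofReal (v / t ^ 2) := by
  simpa [integral_id_gaussianReal, variance_id_gaussianReal]
    using meas_ge_le_variance_div_sq (memLp_id_gaussianReal (μ := μ) (v := v) 2) ht

lemma measure_abs_lt_abs_le_of_map_eq_gaussianReal {Ω : Type*} [MeasurableSpace Ω]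
    {P : Measure Ω} {X Y : Ω → ℝ} (hX : Measurable X) (hY : Measurable Y) {vX vY : ℝ≥0}
    (hvX : vX ≠ 0) (hXlaw : P.map X = gaussianReal 0 vX) (hYlaw : P.map Y = gaussianReal 0 vY)
    {t : ℝ} (ht : 0 < t) :
    P {ω | |X ω| < |Y ω|} ≤ ENNReal.ofReal (2 * t / √(2 * π * vX) + vY / t ^ 2) := by
  have hsub : {ω | |X ω| < |Y ω|} ⊆ X ⁻¹' Ioo (0 - t) (0 + t) ∪ Y ⁻¹' {y | t ≤ |y - 0|} := by
    intro ω hω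
    by_cases h : t ≤ |Y ω|
    · exact Or.inr (by simpa using h)
    · exact Or.inl (by simpa [abs_lt] using hω.trans (not_le.1 h))
  have hmeas : MeasurableSet {y : ℝ | t ≤ |y - 0|} := measurableSet_le (by fun_prop) (by fun_prop)
  calc P {ω | |X ω| < |Y ω|}
      ≤ P (X ⁻¹' Ioo (0 - t) (0 + t)) + P (Y ⁻¹' {y | t ≤ |y - 0|}) :=
        (measure_mono hsub).trans (measure_union_le _ _)
    _ = gaussianReal 0 vX (Ioo (0 - t) (0 + t)) + gaussianReal 0 vY {y | t ≤ |y - 0|} := by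
        rw [← hXlaw, ← hYlaw, Measure.map_apply hX measurableSet_Ioo, Measure.map_apply hY hmeas]
    _ ≤ ENNReal.ofReal (2 * t / √(2 * π * vX)) + ENNReal.ofReal (vY / t ^ 2) :=
        add_le_add (gaussianReal_Ioo_le 0 hvX t) (gaussianReal_le_abs_sub_le 0 vY ht)
    _ = ENNReal.ofReal (2 * t / √(2 * π * vX) + vY / t ^ 2) :=
        (ENNReal.ofReal_add (by positivity) (by positivity)).symm

end ProbabilityTheory

lemma three_le_norm_add_sq {E : Type*} [NormedAddCommGroup E] [InnerProductSpace ℝ E] {x y : E}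
    (hx : ‖x‖ = 1) (hy : ‖y‖ = 1) (hxy : ‖x - y‖ ≤ 1) : 3 ≤ ‖x + y‖ ^ 2 := by
  have := parallelogram_law_with_norm ℝ x y
  rw [hx, hy] at this
  nlinarith [norm_nonneg (x - y)]

lemma anticoncentration_add_chebyshev_le {γ S V : ℝ} (hγ : 0 < γ) (hγ1 : γ ≤ 1) (hS : 3 ≤ S)
    (hV : V ≤ γ ^ 2) :
    2 * (2 * √γ) / √(2 * π * S) + V / (2 * √γ) ^ 2 ≤ √(2 * γ) := by
  have hg : 0 < √γ := sqrt_pos.2 hγ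
  have hgg : √γ ^ 2 = γ := sq_sqrt hγ.le
  have hg1 : √γ ≤ 1 := sqrt_le_one.2 hγ1
  have h2 : √2 ^ 2 = 2 := sq_sqrt zero_le_two
  have h2pos : 0 < √2 := by positivity
  have hden : 3 * √2 ≤ √(2 * π * S) := by
    rw [show 3 * √2 = √18 by rw [show (18 : ℝ) = 3 ^ 2 * 2 by norm_num, sqrt_mul (by norm_num),
      sqrt_sq (by norm_num)]]
    exact sqrt_le_sqrt (by nlinarith [pi_gt_three])
  have hfirst : 2 * (2 * √γ) / √(2 * π * S) ≤ 4 * √γ / (3 * √2) := by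
    rw [show 2 * (2 * √γ) = 4 * √γ by ring]
    gcongr
  have hsecond : V / (2 * √γ) ^ 2 ≤ √γ / 4 := by
    rw [div_le_div_iff₀ (by positivity) (by norm_num)]
    nlinarith
  rw [sqrt_mul zero_le_two]
  calc _ ≤ 4 * √γ / (3 * √2) + √γ / 4 := add_le_add hfirst hsecond
    _ ≤ √2 * √γ := by
      have h2le : √2 ≤ 8 / 3 := by nlinarith
      rw [div_add_div _ _ (by positivity) (by norm_num), div_le_iff₀ (by positivity)]
      nlinarith [mul_le_mul_of_nonneg_right h2le hg.le]

theorem stmt3_general {Ω : Type*} [MeasureSpace Ω]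
    {D : ℕ} (w : Ω → EuclideanSpace ℝ (Fin D)) (hw : Measurable w)
    (hgauss : ∀ v : EuclideanSpace ℝ (Fin D),
      Measure.map (fun ω => (inner ℝ v (w ω) : ℝ)) ℙ = gaussianReal 0 (Real.toNNReal (‖v‖ ^ 2)))
    (y ybar : EuclideanSpace ℝ (Fin D)) (γ : ℝ)
    (hy : ‖y‖ = 1) (hybar : ‖ybar‖ = 1) (hγ : γ ≤ 1) (hdist : ‖y - ybar‖ ≤ γ) :
    (ℙ {ω | ((0 : ℝ) < inner ℝ y (w ω) ∧ (inner ℝ ybar (w ω) : ℝ) < 0)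
        ∨ ((inner ℝ y (w ω) : ℝ) < 0 ∧ (0 : ℝ) < inner ℝ ybar (w ω))}).toReal
      ≤ Real.sqrt (2 * γ) := by
  set s := y + ybar
  set d := y - ybar
  have hevent : {ω | ((0 : ℝ) < inner ℝ y (w ω) ∧ (inner ℝ ybar (w ω) : ℝ) < 0)
      ∨ ((inner ℝ y (w ω) : ℝ) < 0 ∧ (0 : ℝ) < inner ℝ ybar (w ω))}
      ⊆ {ω | |(inner ℝ s (w ω) : ℝ)| < |(inner ℝ d (w ω) : ℝ)|} := by
    intro ω hω
    simp only [mem_ofPred_eq, s, d, inner_add_left, inner_sub_left]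
    refine abs_add_lt_abs_sub_of_mul_neg ?_
    rcases hω with ⟨h1, h2⟩ | ⟨h1, h2⟩
    exacts [mul_neg_of_pos_of_neg h1 h2, mul_neg_of_neg_of_pos h1 h2]
  refine ENNReal.toReal_le_of_le_ofReal (sqrt_nonneg _) ((measure_mono hevent).trans ?_)
  rcases (norm_nonneg _ |>.trans hdist).eq_or_lt with rfl | hγ0
  · simp [norm_le_zero_iff.1 hdist, fun x : ℝ => not_lt.2 (abs_nonneg x)]
  have hs : (3 : ℝ) ≤ (‖s‖ ^ 2).toNNReal := by
    simpa using three_le_norm_add_sq hy hybar (hdist.trans hγ)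
  have hd : ((‖d‖ ^ 2).toNNReal : ℝ) ≤ γ ^ 2 := by
    simpa using pow_le_pow_left₀ (norm_nonneg _) hdist 2
  calc _ ≤ ENNReal.ofReal (2 * (2 * √γ) / √(2 * π * (‖s‖ ^ 2).toNNReal)
          + (‖d‖ ^ 2).toNNReal / (2 * √γ) ^ 2) :=
        measure_abs_lt_abs_le_of_map_eq_gaussianReal (measurable_const.inner hw)
          (measurable_const.inner hw) (NNReal.coe_pos.1 (by linarith)).ne' (hgauss s) (hgauss d)
          (by positivity)
    _ ≤ ENNReal.ofReal √(2 * γ) :=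
        ENNReal.ofReal_le_ofReal (anticoncentration_add_chebyshev_le hγ0 hγ hs hd)

/-- If `w ~ N(0, I_D)` is a standard Gaussian vector in `ℝ^D` (characterized by every linear
functional `⟨v, w⟩` being Gaussian with variance `‖v‖²`) and `y`, `ȳ` are unit vectors with
`‖y - ȳ‖₂ ≤ γ ≤ 1`, then the probability that `⟨w, y⟩` and `⟨w, ȳ⟩` have strictly opposite
signs is at most `√(2γ)`. -/
theorem stmt3 {Ω : Type*} [MeasureSpace Ω] [IsProbabilityMeasure (ℙ : Measure Ω)]
    {D : ℕ} (w : Ω → EuclideanSpace ℝ (Fin D)) (hw : Measurable w)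
    (hgauss : ∀ v : EuclideanSpace ℝ (Fin D),
      Measure.map (fun ω => (inner ℝ v (w ω) : ℝ)) ℙ = gaussianReal 0 (Real.toNNReal (‖v‖ ^ 2)))
    (y ybar : EuclideanSpace ℝ (Fin D)) (γ : ℝ)
    (hy : ‖y‖ = 1) (hybar : ‖ybar‖ = 1) (hγ : γ ≤ 1) (hdist : ‖y - ybar‖ ≤ γ) :
    (ℙ {ω | ((0 : ℝ) < inner ℝ y (w ω) ∧ (inner ℝ ybar (w ω) : ℝ) < 0)
        ∨ ((inner ℝ y (w ω) : ℝ) < 0 ∧ (0 : ℝ) < inner ℝ ybar (w ω))}).toReal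
      ≤ Real.sqrt (2 * γ) :=
  stmt3_general w hw hgauss y ybar γ hy hybar hγ hdist
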